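/- arXiv:2504.07874 — 3 statements merged into one kernel-verified Lean document; each statement's English description precedes it below -/
import Mathlib

section
/- Let p be a prime and A = W(𝔽̄_p)((h))^∧_p. The unique root α* ∈ A of w(h,α) = (α - p)(α + (-1)^p)^p - (h - p² + (-1)^p)α satisfies α* ≡ (-1)^{p+1}·p·h^{-1} (mod p²). -/
/-- The Laurent series ring `W(𝔽̄_p)((h))` over the Witt vectors of `𝔽̄_p`. -/
noncomputable abbrev WLaurent (p : ℕ) [Fact p.Prime] :=
  LaurentSeries (WittVector p (AlgebraicClosure (ZMod p)))

/-- `A = W(𝔽̄_p)((h))^∧_p`, the `p`-completion of `W(𝔽̄_p)((h))`. -/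
noncomputable abbrev ACompl (p : ℕ) [Fact p.Prime] :=
  AdicCompletion (Ideal.span {(p : WLaurent p)}) (WLaurent p)

/-- The element `h` of `A`. -/
noncomputable def hElt (p : ℕ) [Fact p.Prime] : ACompl p :=
  algebraMap (WLaurent p) (ACompl p) (HahnSeries.single 1 1)

/-- The element `h⁻¹` of `A` (the image of the Laurent series `h⁻¹`). -/
noncomputable def hInv (p : ℕ) [Fact p.Prime] : ACompl p :=
  algebraMap (WLaurent p) (ACompl p) (HahnSeries.single (-1) 1)

/-- `α` is a root of `w(h,α) = (α - p)(α + (-1)^p)^p - (h - p² + (-1)^p)α` in `A`. -/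
def IsWRoot (p : ℕ) [Fact p.Prime] (α : ACompl p) : Prop :=
  (α - p) * (α + (-1) ^ p) ^ p - (hElt p - p ^ 2 + (-1) ^ p) * α = 0

/-! Reducing modulo `p` maps `A` onto `W((h))/p ⊆ 𝔽̄_p((h))`, and there Frobenius turns `w(h, α)`
into `α · (α^p - h)`. Since `h` has order `1`, it is not a `p`-th power in `𝔽̄_p((h))`, so `α*`
reduces to `0`, i.e. `α* = pβ`. Expanding `(pβ + (-1)^p)^p ≡ (-1)^p (mod p²)` in
`w(h, pβ) = 0` leaves `-p(-1)^p - h·pβ ≡ 0 (mod p²)`, and multiplying by `h⁻¹` gives the claim. -/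

theorem exists_add_pow_succ_eq {R : Type*} [CommRing R] (x e : R) (n : ℕ) :
    ∃ t : R, (x + e) ^ (n + 1) = e ^ (n + 1) + (n + 1) * x * e ^ n + x ^ 2 * t := by
  induction n with
  | zero => exact ⟨0, by ring⟩
  | succ n ih =>
    obtain ⟨t, ht⟩ := ih
    refine ⟨(n + 1) * e ^ n + (x + e) * t, ?_⟩
    rw [pow_succ', ht]
    push_cast
    ring

theorem neg_one_pow_pow_self {R : Type*} [Monoid R] [HasDistribNeg R] (n : ℕ) :
    ((-1 : R) ^ n) ^ n = (-1) ^ n := by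
  rw [← pow_mul]
  rcases Nat.even_or_odd n with hn | hn
  · rw [(hn.mul_right n).neg_one_pow, hn.neg_one_pow]
  · rw [(hn.mul hn).neg_one_pow, hn.neg_one_pow]

theorem natCast_sq_dvd_sub_of_root {R : Type*} [CommRing R] {p : ℕ} (hp : 0 < p) {h u : R}
    (hu : u * h = 1) (β : R)
    (hβ : (p * β - p) * (p * β + (-1) ^ p) ^ p - (h - p ^ 2 + (-1) ^ p) * (p * β) = 0) :
    (p : R) ^ 2 ∣ p * β - (-1) ^ (p + 1) * p * u := by
  obtain ⟨t, ht⟩ := exists_add_pow_succ_eq (p * β : R) ((-1) ^ p) (p - 1)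
  rw [Nat.sub_add_cancel hp, neg_one_pow_pow_self, Nat.cast_pred hp, sub_add_cancel] at ht
  set s := β * ((-1) ^ p) ^ (p - 1) + β ^ 2 * t
  refine ⟨p * u * ((β - 1) * s + β), ?_⟩
  linear_combination (-u) * hβ + u * (p * β - p) * ht - p * β * hu

namespace HahnSeries

variable {Γ R S : Type*} [PartialOrder Γ]

theorem exists_eq_smul_of_forall_dvd_coeff [Semiring R] (r : R) (f : HahnSeries Γ R)
    (h : ∀ g, r ∣ f.coeff g) : ∃ q : HahnSeries Γ R, f = r • q := by
  classical
  choose c hc using h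
  -- the quotient is taken to be `0` off the support of `f`, so that its support stays well-ordered
  let c' : Γ → R := fun g => if f.coeff g = 0 then 0 else c g
  have hsupp : Function.support c' ⊆ f.support := fun g hg => by
    by_contra h0
    exact hg (if_pos (not_not.mp h0))
  refine ⟨⟨c', f.isPWO_support.mono hsupp⟩, ?_⟩
  ext g
  simp only [coeff_smul, smul_eq_mul, c']
  split_ifs with h0
  · rw [h0, mul_zero]
  · exact hc g

variable [AddCommMonoid Γ] [IsOrderedCancelAddMonoid Γ]

instance instCharP [Semiring R] (p : ℕ) [CharP R p] : CharP (HahnSeries Γ R) p :=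
  charP_of_injective_ringHom C_injective p

@[simps]
def mapRingHom [Semiring R] [Semiring S] (f : R →+* S) : HahnSeries Γ R →+* HahnSeries Γ S where
  toFun x := x.map f
  map_one' := HahnSeries.map_one f.toMonoidWithZeroHom
  map_mul' _ _ := HahnSeries.map_mul f.toNonUnitalRingHom
  map_zero' := HahnSeries.map_zero f.toZeroHom
  map_add' _ _ := HahnSeries.map_add f.toAddMonoidHom

theorem C_dvd_of_mapRingHom_eq_zero [CommSemiring R] [Semiring S] {f : R →+* S} {r : R}
    (hf : ∀ a, f a = 0 → r ∣ a) {x : HahnSeries Γ R} (hx : mapRingHom f x = 0) :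
    C r ∣ x := by
  obtain ⟨q, rfl⟩ := exists_eq_smul_of_forall_dvd_coeff r x fun g =>
    hf _ (by simpa using congrArg (coeff · g) hx)
  exact ⟨q, C_mul_eq_smul.symm⟩

end HahnSeries

theorem WittVector.p_dvd_of_constantCoeff_eq_zero {p : ℕ} [Fact p.Prime] {k : Type*} [Field k]
    [CharP k p] [PerfectRing k p] {x : WittVector p k} (hx : constantCoeff x = 0) :
    (p : WittVector p k) ∣ x := by
  rcases eq_or_ne x 0 with rfl | hne
  · exact dvd_zero _
  obtain ⟨m, b, hb0, rfl⟩ := exists_eq_pow_p_mul x hne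
  rcases m with _ | m
  · simp_all
  · exact (dvd_pow_self _ m.succ_ne_zero).mul_right b

namespace LaurentSeries

theorem pow_ne_single_one {K : Type*} [Semiring K] [NoZeroDivisors K] [Nontrivial K]
    {n : ℕ} (hn : n ≠ 1) (a : LaurentSeries K) : a ^ n ≠ HahnSeries.single 1 1 := by
  intro h
  have horder := congrArg HahnSeries.order h
  rw [HahnSeries.order_pow, HahnSeries.order_single one_ne_zero, nsmul_eq_mul] at horder
  exact hn (by exact_mod_cast Int.eq_one_of_mul_eq_one_right (by positivity) horder)

theorem eq_zero_of_root_mod_p {K : Type*} [CommRing K] [IsDomain K] {p : ℕ} [Fact p.Prime]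
    [CharP K p] {a : LaurentSeries K}
    (h : (a - (p : LaurentSeries K)) * (a + (-1) ^ p) ^ p
      - (HahnSeries.single 1 1 - (p : LaurentSeries K) ^ 2 + (-1) ^ p) * a = 0) :
    a = 0 := by
  have hfrob : (a + (-1) ^ p) ^ p = a ^ p + (-1) ^ p := by
    rw [add_pow_char, neg_one_pow_pow_self]
  rw [CharP.cast_eq_zero, hfrob] at h
  have h' : a * (a ^ p - HahnSeries.single 1 1) = 0 := by linear_combination h
  refine (mul_eq_zero.mp h').resolve_right fun h0 => ?_
  exact pow_ne_single_one (Fact.out : p.Prime).one_lt.ne' a (sub_eq_zero.mp h0)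

end LaurentSeries

section Reduction

variable (p : ℕ) [Fact p.Prime]

open AdicCompletion

noncomputable def reductionModP : ACompl p →+* LaurentSeries (AlgebraicClosure (ZMod p)) :=
  (Ideal.Quotient.lift (Ideal.span {(p : WLaurent p)})
      (HahnSeries.mapRingHom WittVector.constantCoeff) fun a ha => by
        obtain ⟨b, rfl⟩ := Ideal.mem_span_singleton.mp ha
        rw [map_mul, map_natCast, CharP.cast_eq_zero, zero_mul]).comp
    (evalOneₐ _).toRingHom

theorem reductionModP_algebraMap (x : WLaurent p) :
    reductionModP p (algebraMap _ _ x) = HahnSeries.mapRingHom WittVector.constantCoeff x := by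
  simp [reductionModP, ← RingHom.comp_apply _ (algebraMap _ _)]

theorem reductionModP_hElt : reductionModP p (hElt p) = HahnSeries.single 1 1 := by
  ext n
  simp [hElt, reductionModP_algebraMap, HahnSeries.coeff_single]

theorem natCast_dvd_of_reductionModP_eq_zero {x : ACompl p} (hx : reductionModP p x = 0) :
    (p : ACompl p) ∣ x := by
  have hker : evalOneₐ _ x = 0 := by
    obtain ⟨y, hy⟩ := Ideal.Quotient.mk_surjective (evalOneₐ _ x)
    have hCy : HahnSeries.C (p : WittVector p _) ∣ y :=
      HahnSeries.C_dvd_of_mapRingHom_eq_zero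
        (fun _ ha => WittVector.p_dvd_of_constantCoeff_eq_zero ha) (by
          simpa [reductionModP, ← hy] using hx)
    rw [← hy, Ideal.Quotient.eq_zero_iff_dvd]
    simpa using hCy
  have hmem : x ∈ (Ideal.span {(p : WLaurent p)}).map (algebraMap _ (ACompl p)) := by
    rw [← ker_evalOneₐ_eq_map _ (Submodule.fg_span_singleton _)]
    exact hker
  rwa [Ideal.map_span, Set.image_singleton, Ideal.mem_span_singleton, map_natCast] at hmem

theorem hInv_mul_hElt : hInv p * hElt p = 1 := by
  rw [hInv, hElt, ← map_mul, HahnSeries.single_mul_single]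
  norm_num

end Reduction

/-- The unique root `α*` of `w(h,·)` in `A = W(𝔽̄_p)((h))^∧_p` satisfies
`α* ≡ (-1)^{p+1}·p·h⁻¹ (mod p²)`. -/
theorem stmt9 (p : ℕ) [Fact p.Prime] :
    ∀ α : ACompl p, IsWRoot p α →
      (p : ACompl p) ^ 2 ∣ (α - (-1) ^ (p + 1) * p * hInv p) := by
  intro α hα
  obtain ⟨β, rfl⟩ : (p : ACompl p) ∣ α := by
    refine natCast_dvd_of_reductionModP_eq_zero p (LaurentSeries.eq_zero_of_root_mod_p ?_)
    simpa [reductionModP_hElt] using congrArg (reductionModP p) hα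
  exact natCast_sq_dvd_sub_of_root (Fact.out : p.Prime).pos (hInv_mul_hElt p) β hα
end

section
/- Let p be a prime. Define w₁ = -h ∈ ℤ[h], w_{p+1} = 1, and w_i = (-1)^{p(p-i+1)}[C(p,i-1) + (-1)^{p+1} p C(p,i)] for i ∈ {0, 2, 3, ..., p}. For 0 ≤ i ≤ p and 1 ≤ τ ≤ p define d_{i,τ} = Σ_{n=0}^{τ-1} (-1)^{τ-n} w₀^n Σ_{m₁+···+m_{τ-n} = τ+i, 1 ≤ m_s ≤ p+1, m_{τ-n} ≥ i+1} w_{m₁}···w_{m_{τ-n}}. Then in ℤ[h] one has the congruence Σ_{τ=1}^{p} w_{τ+1}·d_{0,τ} ≡ h^p (mod p). -/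
/-- `w_i = (-1)^{p(p-i+1)} [ C(p,i-1) + (-1)^{p+1} p · C(p,i) ]` (with `C(p,-1) = 0`). -/
def wCoef (p i : ℕ) : ℤ :=
  (-1) ^ (p * (p + 1 - i)) *
    ((if i = 0 then 0 else (p.choose (i - 1) : ℤ)) + (-1) ^ (p + 1) * p * (p.choose i))

/-- `d_{i,τ} = Σ_{n=0}^{τ-1} (-1)^{τ-n} w₀^n
Σ_{m₁+⋯+m_{τ-n} = τ+i, 1 ≤ m_s ≤ p+1, m_{τ-n} ≥ i+1} w_{m₁} ⋯ w_{m_{τ-n}}`,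
where the last-component condition is imposed on the index `s` with `s + 1 = τ - n`. -/
def dCoef {R : Type*} [CommRing R] (p : ℕ) (w : ℕ → R) (i τ : ℕ) : R :=
  ∑ n ∈ Finset.range τ,
    (-1) ^ (τ - n) * w 0 ^ n *
      ∑ m ∈ (Fintype.piFinset fun _ : Fin (τ - n) => Finset.Icc 1 (p + 1)).filter
          (fun m => (∑ s, m s) = τ + i ∧ ∀ s : Fin (τ - n), (s : ℕ) + 1 = τ - n → i + 1 ≤ m s),
        ∏ s, w (m s)

/-- The coefficients `w_i` as elements of `ℤ[h]`: `w₁ = -h` and otherwise the integer `w_i`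
(note `w_{p+1} = 1` already). -/
noncomputable def wPolyCoef (p : ℕ) : ℕ → Polynomial ℤ := fun i =>
  if i = 1 then -Polynomial.X else Polynomial.C (wCoef p i)

open Polynomial Finset

lemma wCoef_succ (p : ℕ) : wCoef p (p + 1) = 1 := by
  simp [wCoef, Nat.choose_succ_self, Nat.choose_self]

lemma dvd_wCoef_zero (p : ℕ) : (p : ℤ) ∣ wCoef p 0 := by
  refine ⟨(-1) ^ (p * (p + 1 - 0)) * (-1) ^ (p + 1), ?_⟩
  simp only [wCoef, if_true, reduceIte, Nat.choose_zero_right, Nat.cast_one, mul_one, zero_add]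
  ring

lemma dvd_wCoef_mid (p i : ℕ) (hp : p.Prime) (h2 : 2 ≤ i) (hip : i ≤ p) :
    (p : ℤ) ∣ wCoef p i := by
  have h1 : i ≠ 0 := by omega
  have hd : p ∣ p.choose (i - 1) := hp.dvd_choose_self (by omega) (by omega)
  simp only [wCoef, if_neg h1]
  apply Dvd.dvd.mul_left
  apply dvd_add
  · exact_mod_cast Int.natCast_dvd_natCast.mpr hd
  · exact ⟨(-1) ^ (p + 1) * (p.choose i), by ring⟩

lemma dCoef_map {R S : Type*} [CommRing R] [CommRing S] (f : R →+* S) (p : ℕ) (w : ℕ → R)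
    (i τ : ℕ) : f (dCoef p w i τ) = dCoef p (fun j => f (w j)) i τ := by
  simp [dCoef, map_sum, map_mul, map_pow, map_prod]

/-- The Frobenius congruence: `Σ_{τ=1}^{p} w_{τ+1}·d_{0,τ} ≡ h^p (mod p)` in `ℤ[h]`. -/
theorem stmt13 (p : ℕ) (hp : p.Prime) :
    (p : Polynomial ℤ) ∣
      (∑ τ ∈ Finset.Icc 1 p, wPolyCoef p (τ + 1) * dCoef p (wPolyCoef p) 0 τ) -
        Polynomial.X ^ p := by
  haveI : NeZero p := ⟨hp.ne_zero⟩
  set φ : Polynomial ℤ →+* Polynomial (ZMod p) :=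
    Polynomial.mapRingHom (Int.castRingHom (ZMod p)) with hφ
  suffices h : φ ((∑ τ ∈ Finset.Icc 1 p, wPolyCoef p (τ + 1) * dCoef p (wPolyCoef p) 0 τ) -
      Polynomial.X ^ p) = 0 by
    rw [show ((p : Polynomial ℤ)) = Polynomial.C (p : ℤ) by simp]
    rw [Polynomial.C_dvd_iff_dvd_coeff]
    intro n
    have h2 := congrArg (fun q => Polynomial.coeff q n) h
    simp only [hφ, coe_mapRingHom, Polynomial.coeff_map, Polynomial.coeff_zero,
      eq_intCast, Int.coe_castRingHom] at h2
    exact (ZMod.intCast_zmod_eq_zero_iff_dvd _ p).1 h2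
  set w' : ℕ → Polynomial (ZMod p) := fun j => φ (wPolyCoef p j) with hw'
  have hw0 : w' 0 = 0 := by
    simp only [hw', wPolyCoef, if_neg (by norm_num : (0:ℕ) ≠ 1), hφ, coe_mapRingHom, map_C]
    rw [show ((Int.castRingHom (ZMod p)) (wCoef p 0)) = 0 by
      exact (ZMod.intCast_zmod_eq_zero_iff_dvd _ p).2 (dvd_wCoef_zero p)]
    simp
  have hw1 : w' 1 = -X := by
    simp [hw', wPolyCoef, hφ]
  have hwtop : w' (p + 1) = 1 := by
    have : p + 1 ≠ 1 := by have := hp.two_le; omega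
    simp [hw', wPolyCoef, if_neg this, hφ, wCoef_succ, hp.ne_zero]
  have hwmid : ∀ j, 2 ≤ j → j ≤ p → w' j = 0 := by
    intro j hj2 hjp
    have : j ≠ 1 := by omega
    simp only [hw', wPolyCoef, if_neg this, hφ, coe_mapRingHom, map_C]
    rw [show ((Int.castRingHom (ZMod p)) (wCoef p j)) = 0 by
      exact (ZMod.intCast_zmod_eq_zero_iff_dvd _ p).2 (dvd_wCoef_mid p j hp hj2 hjp)]
    simp
  rw [map_sub, map_sum]
  simp only [map_mul, dCoef_map]
  have hXp : φ (X ^ p) = X ^ p := by simp [hφ]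
  rw [hXp]
  have hsum : ∑ τ ∈ Finset.Icc 1 p, φ (wPolyCoef p (τ + 1)) *
      dCoef p (fun j => φ (wPolyCoef p j)) 0 τ = dCoef p w' 0 p := by
    rw [Finset.sum_eq_single p]
    · rw [show φ (wPolyCoef p (p + 1)) = w' (p + 1) from rfl, hwtop, one_mul]
    · intro τ hτ hne
      rw [Finset.mem_Icc] at hτ
      rw [show φ (wPolyCoef p (τ + 1)) = w' (τ + 1) from rfl,
        hwmid (τ + 1) (by omega) (by omega), zero_mul]
    · intro hp'
      exfalso; exact hp' (Finset.mem_Icc.mpr ⟨hp.one_lt.le.trans' (by norm_num), le_refl p⟩)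
  rw [hsum]
  have hd : dCoef p w' 0 p = X ^ p := by
    rw [dCoef]
    rw [Finset.sum_eq_single 0]
    · have hfil : ((Fintype.piFinset fun _ : Fin (p - 0) => Finset.Icc 1 (p + 1)).filter
          (fun m => (∑ s, m s) = p + 0 ∧
            ∀ s : Fin (p - 0), (s : ℕ) + 1 = p - 0 → 0 + 1 ≤ m s)) = {fun _ => 1} := by
        ext m
        simp only [Finset.mem_filter, Fintype.mem_piFinset, Finset.mem_Icc,
          Finset.mem_singleton, Nat.sub_zero, Nat.add_zero]
        constructor
        · rintro ⟨hmem, hsum', -⟩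
          funext s
          have hle : ∀ t ∈ (Finset.univ : Finset (Fin p)), 1 ≤ m t := fun t _ => (hmem t).1
          have heq : ∑ t : Fin p, (1 : ℕ) = ∑ t : Fin p, m t := by
            rw [hsum']; simp
          exact ((Finset.sum_eq_sum_iff_of_le hle).1 heq s (Finset.mem_univ s)).symm
        · rintro rfl
          exact ⟨fun t => ⟨le_refl 1, Nat.le_add_left 1 p⟩, by simp, fun s _ => le_refl 1⟩
      rw [hfil]
      rw [Finset.sum_singleton]
      simp only [Nat.sub_zero, pow_zero, mul_one, hw1]
      rw [Finset.prod_const]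
      simp only [Finset.card_univ, Fintype.card_fin]
      rw [mul_comm, ← mul_pow]
      simp
    · intro n hn hne
      rw [hw0, zero_pow hne, mul_zero, zero_mul]
    · intro hp'
      exfalso; exact hp' (Finset.mem_range.mpr hp.pos)
  rw [hd, sub_self]
end

section
/- Let p be a prime and r ≥ 1, m ≥ 0 integers. The number of subgroups (sublattices) of ℤ^r of index p^m equals ∏_{t=1}^{r-1} (p^{m+t} - 1)/(p^t - 1). -/
/-!
A subgroup `L ≤ ℤ × G` is determined by the nonnegative generator `d` of its projection to `ℤ`,
by `M = L ∩ G`, and by the class modulo `M` of any `x` with `(d, x) ∈ L`; every triple occurs,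
and `[ℤ × G : L] = d · [G : M]`. Hence the number `c_{r+1}(p^m)` of subgroups of index `p^m` in
`ℤ^{r+1}` equals `∑_{b ≤ m} p^b c_r(p^b)`, with `c_1 = 1`. The Gaussian binomials
`[m + r choose r]_p` satisfy the same recursion by the `q`-Pascal rule.
-/

open AddSubgroup Finset

section Gauss

variable {K : Type*} [Field K]

/-- The Gaussian binomial coefficient `[m + r choose r]_q`. -/
def gaussBinom (q : K) (m r : ℕ) : K :=
  ∏ i ∈ range r, (q ^ (m + i + 1) - 1) / (q ^ (i + 1) - 1)

variable {q : K} (hq : ∀ k, q ^ (k + 1) ≠ 1)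
include hq

theorem gaussBinom_zero_left (r : ℕ) : gaussBinom q 0 r = 1 :=
  prod_eq_one fun i _ => by rw [zero_add, div_self (sub_ne_zero.2 (hq i))]

theorem gaussBinom_succ_right_mul (m r : ℕ) :
    gaussBinom q m (r + 1) * (q ^ (r + 1) - 1) = (q ^ (m + 1) - 1) * gaussBinom q (m + 1) r := by
  have hnum : ∏ i ∈ range (r + 1), (q ^ (m + i + 1) - 1) =
      (q ^ (m + 1) - 1) * ∏ i ∈ range r, (q ^ (m + 1 + i + 1) - 1) := by
    rw [prod_range_succ', mul_comm]
    exact congr_arg _ (prod_congr rfl fun i _ => by ring_nf)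
  have hr := sub_ne_zero.2 (hq r)
  rw [gaussBinom, gaussBinom, prod_div_distrib, prod_div_distrib, hnum,
    prod_range_succ (fun i => q ^ (i + 1) - 1)]
  field_simp

theorem gaussBinom_succ_succ (m r : ℕ) :
    gaussBinom q (m + 1) (r + 1) =
      gaussBinom q m (r + 1) + q ^ (m + 1) * gaussBinom q (m + 1) r := by
  have hr := sub_ne_zero.2 (hq r)
  have h := gaussBinom_succ_right_mul hq m r
  rw [← eq_div_iff hr] at h
  rw [gaussBinom, prod_range_succ, ← gaussBinom, h]
  field_simp
  ring

theorem sum_pow_mul_gaussBinom (m r : ℕ) :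
    ∑ b ∈ range (m + 1), q ^ b * gaussBinom q b r = gaussBinom q m (r + 1) := by
  induction m with
  | zero => simp [gaussBinom_zero_left hq]
  | succ m ih => rw [sum_range_succ, ih, gaussBinom_succ_succ hq]

end Gauss

namespace AddSubgroup

variable {G : Type*} [AddCommGroup G]

theorem index_eq_index_map_fst_mul_index_comap_inr {A : Type*} [AddCommGroup A]
    (L : AddSubgroup (A × G)) :
    L.index = (L.map (AddMonoidHom.fst A G)).index * (L.comap (AddMonoidHom.inr A G)).index := by
  have hker : (AddMonoidHom.fst A G).ker = (AddMonoidHom.inr A G).range := by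
    ext ⟨a, g⟩
    simp [mem_prod, eq_comm]
  rw [← relIndex_mul_index (le_sup_left : L ≤ L ⊔ (AddMonoidHom.fst A G).ker),
    relIndex_sup_left, index_map,
    (AddMonoidHom.fst A G).range_eq_top_of_surjective Prod.fst_surjective, index_top, mul_one,
    hker, index_comap, mul_comm]

theorem eq_zmultiples_index (H : AddSubgroup ℤ) : H = zmultiples (H.index : ℤ) := by
  obtain ⟨a, rfl⟩ := Int.subgroup_cyclic H
  rw [← zmultiples_eq_closure, Int.index_zmultiples, Int.zmultiples_natAbs]

/-- For `q : G ⧸ M`, the subgroup `{(k * d, g) | k : ℤ, g ≡ k • q mod M}` of `ℤ × G`. -/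
def skewProd (d : ℤ) (M : AddSubgroup G) (q : G ⧸ M) : AddSubgroup (ℤ × G) :=
  (zmultiples (d, q)).comap ((AddMonoidHom.id ℤ).prodMap (QuotientAddGroup.mk' M))

variable {d : ℤ} {M : AddSubgroup G}

theorem mem_skewProd {q : G ⧸ M} {z : ℤ × G} :
    z ∈ skewProd d M q ↔ ∃ k : ℤ, k * d = z.1 ∧ k • q = z.2 := by
  simp [skewProd, mem_zmultiples_iff, Prod.ext_iff]

theorem map_fst_skewProd (q : G ⧸ M) :
    (skewProd d M q).map (AddMonoidHom.fst ℤ G) = zmultiples d := by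
  ext a
  simp only [mem_map, mem_skewProd, AddMonoidHom.coe_fst, Int.mem_zmultiples_iff]
  constructor
  · rintro ⟨z, ⟨k, hk, -⟩, rfl⟩
    exact ⟨k, by rw [← hk, mul_comm]⟩
  · rintro ⟨k, rfl⟩
    obtain ⟨g, hg⟩ := QuotientAddGroup.mk_surjective (k • q)
    exact ⟨(d * k, g), ⟨k, mul_comm _ _, hg.symm⟩, rfl⟩

theorem comap_inr_skewProd (hd : d ≠ 0) (q : G ⧸ M) :
    (skewProd d M q).comap (AddMonoidHom.inr ℤ G) = M := by
  ext g
  simp [mem_skewProd, hd, eq_comm (a := (0 : G ⧸ M)), QuotientAddGroup.eq_zero_iff]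

theorem index_skewProd (hd : d ≠ 0) (q : G ⧸ M) :
    (skewProd d M q).index = d.natAbs * M.index := by
  rw [index_eq_index_map_fst_mul_index_comap_inr, map_fst_skewProd, comap_inr_skewProd hd,
    Int.index_zmultiples]

theorem skewProd_injective (hd : d ≠ 0) : Function.Injective (skewProd d M) := by
  intro q q' h
  have : (d, q'.out) ∈ skewProd d M q := h ▸ mem_skewProd.2 ⟨1, one_mul d, by simp⟩
  obtain ⟨k, hk, hkq⟩ := mem_skewProd.1 this
  rw [mul_eq_right₀ hd] at hk
  simpa [hk] using hkq

theorem exists_eq_skewProd (L : AddSubgroup (ℤ × G)) :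
    ∃ q, L = skewProd (L.map (AddMonoidHom.fst ℤ G)).index
      (L.comap (AddMonoidHom.inr ℤ G)) q := by
  set d : ℤ := ((L.map (AddMonoidHom.fst ℤ G)).index : ℤ)
  have hfst : ∀ a, a ∈ L.map (AddMonoidHom.fst ℤ G) ↔ ∃ k : ℤ, k * d = a := fun a => by
    rw [eq_zmultiples_index (L.map _), mem_zmultiples_iff]
    rfl
  obtain ⟨⟨_, x⟩, hx, rfl⟩ := (hfst d).2 ⟨1, one_mul d⟩
  refine ⟨x, ?_⟩
  ext ⟨a, g⟩
  simp only [mem_skewProd, ← QuotientAddGroup.mk_zsmul, QuotientAddGroup.eq, mem_comap,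
    AddMonoidHom.inr_apply]
  have hdecomp : ∀ k : ℤ, k * d = a → (a, g) = k • (d, x) + (0, -(k • x) + g) := by
    rintro k rfl
    ext <;> simp
  constructor
  · intro hz
    obtain ⟨k, hk⟩ := (hfst a).1 (mem_map_of_mem _ hz)
    refine ⟨k, hk, ?_⟩
    rw [hdecomp k hk] at hz
    simpa [neg_add_eq_sub] using sub_mem hz (zsmul_mem hx k)
  · rintro ⟨k, hk, hkg⟩
    rw [hdecomp k hk]
    exact add_mem (zsmul_mem hx k) hkg

theorem natCast_div_ne_zero_of_mem_divisors {n e : ℕ} (he : e ∈ n.divisors) :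
    ((n / e : ℕ) : ℤ) ≠ 0 :=
  Int.natCast_ne_zero.2 <| (Nat.div_ne_zero_iff_of_dvd (Nat.dvd_of_mem_divisors he)).2
    ⟨Nat.ne_zero_of_mem_divisors he, (Nat.pos_of_mem_divisors he).ne'⟩

variable (G) in
def skewProdSigma (n : ℕ) :
    (Σ e : n.divisors, Σ M : {M : AddSubgroup G // M.index = e}, G ⧸ M.1) →
      {L : AddSubgroup (ℤ × G) // L.index = n} :=
  fun s => ⟨skewProd (n / s.1 : ℕ) s.2.1 s.2.2, by
    rw [index_skewProd (natCast_div_ne_zero_of_mem_divisors s.1.2), s.2.1.2, Int.natAbs_natCast,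
      Nat.div_mul_cancel (Nat.dvd_of_mem_divisors s.1.2)]⟩

theorem skewProdSigma_injective (n : ℕ) : Function.Injective (skewProdSigma G n) := by
  rintro ⟨⟨e, he⟩, ⟨M, hM⟩, q⟩ ⟨⟨e', he'⟩, ⟨M', hM'⟩, q'⟩ h
  have hd := natCast_div_ne_zero_of_mem_divisors he
  have hd' := natCast_div_ne_zero_of_mem_divisors he'
  replace h : skewProd (n / e : ℕ) M q = skewProd (n / e' : ℕ) M' q' := congr_arg Subtype.val h
  obtain rfl : M = M' := by
    simpa only [comap_inr_skewProd hd, comap_inr_skewProd hd'] using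
      congr_arg (comap (AddMonoidHom.inr ℤ G)) h
  obtain rfl : e = e' := hM.symm.trans hM'
  obtain rfl : q = q' := skewProd_injective hd h
  rfl

theorem skewProdSigma_surjective {n : ℕ} (hn : n ≠ 0) :
    Function.Surjective (skewProdSigma G n) := by
  rintro ⟨L, hL⟩
  obtain ⟨q, hq⟩ := exists_eq_skewProd L
  have hidx := index_eq_index_map_fst_mul_index_comap_inr L
  rw [hL] at hidx
  have he : (L.comap (AddMonoidHom.inr ℤ G)).index ≠ 0 := right_ne_zero_of_mul (hidx ▸ hn)
  refine ⟨⟨⟨_, Nat.mem_divisors.2 ⟨Dvd.intro_left _ hidx.symm, hn⟩⟩, ⟨_, rfl⟩, q⟩,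
    Subtype.ext ?_⟩
  change skewProd ((n / (L.comap (AddMonoidHom.inr ℤ G)).index : ℕ) : ℤ) _ q = L
  rw [hidx, Nat.mul_div_cancel _ (Nat.pos_of_ne_zero he)]
  exact hq.symm

variable (G) in
noncomputable def sigmaEquivIndexEq {n : ℕ} (hn : n ≠ 0) :
    (Σ e : n.divisors, Σ M : {M : AddSubgroup G // M.index = e}, G ⧸ M.1) ≃
      {L : AddSubgroup (ℤ × G) // L.index = n} :=
  Equiv.ofBijective _ ⟨skewProdSigma_injective n, skewProdSigma_surjective hn⟩

instance finite_quotient_of_index_mem_divisors {n : ℕ} {e : n.divisors}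
    (M : {M : AddSubgroup G // M.index = e}) : Finite (G ⧸ M.1) :=
  index_ne_zero_iff_finite.1 (by rw [M.2]; exact (Nat.pos_of_mem_divisors e.2).ne')

theorem finite_index_prod_int {n : ℕ} (hn : n ≠ 0)
    (hfin : ∀ e ∈ n.divisors, Finite {M : AddSubgroup G // M.index = e}) :
    Finite {L : AddSubgroup (ℤ × G) // L.index = n} :=
  have := fun e : n.divisors => hfin e e.2
  Finite.of_equiv _ (sigmaEquivIndexEq G hn)

theorem card_index_prod_int {n : ℕ} (hn : n ≠ 0)
    (hfin : ∀ e ∈ n.divisors, Finite {M : AddSubgroup G // M.index = e}) :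
    Nat.card {L : AddSubgroup (ℤ × G) // L.index = n} =
      ∑ e ∈ n.divisors, e * Nat.card {M : AddSubgroup G // M.index = e} := by
  have := fun e : n.divisors => hfin e e.2
  rw [← Nat.card_congr (sigmaEquivIndexEq G hn), Nat.card_sigma, ← sum_coe_sort n.divisors]
  refine sum_congr rfl fun e _ => ?_
  have := Fintype.ofFinite {M : AddSubgroup G // M.index = e}
  rw [Nat.card_sigma, sum_congr rfl fun M _ => M.2, sum_const, card_univ,
    ← Nat.card_eq_fintype_card, smul_eq_mul, mul_comm]

theorem card_index_prime_pow_prod_int {p : ℕ} (hp : p.Prime) (m : ℕ)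
    (hfin : ∀ b, Finite {M : AddSubgroup G // M.index = p ^ b}) :
    Nat.card {L : AddSubgroup (ℤ × G) // L.index = p ^ m} =
      ∑ b ∈ range (m + 1), p ^ b * Nat.card {M : AddSubgroup G // M.index = p ^ b} := by
  rw [card_index_prod_int (pow_ne_zero m hp.ne_zero) fun e he => ?_, Nat.divisors_prime_pow hp,
    sum_map]
  · rfl
  · obtain ⟨b, -, rfl⟩ := (Nat.mem_divisors_prime_pow hp _).1 he
    exact hfin b

theorem card_index_int (n : ℕ) : Nat.card {H : AddSubgroup ℤ // H.index = n} = 1 :=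
  Nat.card_eq_one_iff_unique.2
    ⟨⟨fun H H' => Subtype.ext <| by
        rw [eq_zmultiples_index H.1, eq_zmultiples_index H'.1, H.2, H'.2]⟩,
      ⟨⟨zmultiples (n : ℤ), by simp⟩⟩⟩

end AddSubgroup

def AddEquiv.addSubgroupIndexEqCongr {A B : Type*} [AddCommGroup A] [AddCommGroup B] (e : A ≃+ B)
    (n : ℕ) : {L : AddSubgroup A // L.index = n} ≃ {L : AddSubgroup B // L.index = n} :=
  e.mapAddSubgroup.toEquiv.subtypeEquiv fun L => by simp

def intProdPiEquiv (r : ℕ) : ℤ × (Fin r → ℤ) ≃+ (Fin (r + 1) → ℤ) :=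
  (Fin.consLinearEquiv ℤ fun _ : Fin (r + 1) => ℤ).toAddEquiv

theorem finite_index_pi_int (r : ℕ) {n : ℕ} (hn : n ≠ 0) :
    Finite {L : AddSubgroup (Fin r → ℤ) // L.index = n} := by
  induction r generalizing n with
  | zero =>
    have : Subsingleton (AddSubgroup (Fin 0 → ℤ)) := AddSubgroup.subsingleton_iff.2 inferInstance
    infer_instance
  | succ r ih =>
    have := AddSubgroup.finite_index_prod_int hn fun e he => ih (Nat.pos_of_mem_divisors he).ne'
    exact Finite.of_equiv _ ((intProdPiEquiv r).addSubgroupIndexEqCongr n)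

theorem card_index_prime_pow_pi_int {p : ℕ} (hp : p.Prime) (r m : ℕ) :
    (Nat.card {L : AddSubgroup (Fin (r + 1) → ℤ) // L.index = p ^ m} : ℚ) =
      gaussBinom (p : ℚ) m r := by
  induction r generalizing m with
  | zero =>
    rw [← Nat.card_congr ((AddEquiv.funUnique (Fin 1) ℤ).symm.addSubgroupIndexEqCongr _),
      AddSubgroup.card_index_int]
    simp [gaussBinom]
  | succ r ih =>
    have hp1 : ∀ k, (p : ℚ) ^ (k + 1) ≠ 1 := fun k =>
      (one_lt_pow₀ (by exact_mod_cast hp.one_lt) k.succ_ne_zero).ne'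
    rw [← Nat.card_congr ((intProdPiEquiv (r + 1)).addSubgroupIndexEqCongr _),
      AddSubgroup.card_index_prime_pow_prod_int hp m
        fun b => finite_index_pi_int _ (pow_ne_zero b hp.ne_zero)]
    push_cast
    simp_rw [ih]
    exact sum_pow_mul_gaussBinom hp1 m r

/-- The number of sublattices of `ℤ^r` of index `p^m` is `∏_{t=1}^{r-1} (p^{m+t}-1)/(p^t-1)`. -/
theorem stmt14 (p r m : ℕ) (hp : p.Prime) (hr : 1 ≤ r) :
    (Nat.card {L : AddSubgroup (Fin r → ℤ) // L.index = p ^ m} : ℚ) =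
      ∏ t ∈ Finset.Icc 1 (r - 1), ((p : ℚ) ^ (m + t) - 1) / ((p : ℚ) ^ t - 1) := by
  obtain ⟨r, rfl⟩ := Nat.exists_eq_add_of_le' hr
  rw [card_index_prime_pow_pi_int hp, gaussBinom, Nat.add_sub_cancel,
    ← Ico_add_one_right_eq_Icc, prod_Ico_eq_prod_range]
  refine prod_congr rfl fun i _ => ?_
  ring_nf
end
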